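/- Let (G,P,δ) be a square free symmetric homogeneous Garside structure of finite type. Let k ≥ 1, let A be a simple element with A ≠ 1 and A ≠ δ, let B = ∂A (so AB = δ), and let x be an atom such that the product A·x^k·B (with x^k standing for k factors x) is in left normal form. Set X = A x^k B, and let Y ∈ G with inf Y = 0. Then either δ ≼ XY, or the initial factor of the left normal form of XY equals A, i.e. ι(XY) = A. -/

import Mathlib

/-- A Garside structure `(G, P, Δ)` on a group `G`: `P` is the submonoid of positive
elements, `Δ` the Garside element.  The axioms (G1)-(G4) are stated below:
the prefix relation `a ≼ b ⟺ a⁻¹b ∈ P` is a lattice order (with gcd `wedge` and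
lcm `vee`), the simple elements `[1,Δ]` generate `G`, conjugation by `Δ` preserves `P`,
and every nontrivial positive element has finite letter length. -/
structure GarsideStructure (G : Type*) [Group G] where
  P : Set G
  one_mem : (1 : G) ∈ P
  mul_mem : ∀ {a b : G}, a ∈ P → b ∈ P → a * b ∈ P
  inter_inv : ∀ a : G, a ∈ P → a⁻¹ ∈ P → a = 1
  Δ : G
  Δ_mem : Δ ∈ P
  wedge : G → G → G
  vee : G → G → G
  wedge_le_left : ∀ a b : G, (wedge a b)⁻¹ * a ∈ P
  wedge_le_right : ∀ a b : G, (wedge a b)⁻¹ * b ∈ P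
  le_wedge : ∀ a b c : G, c⁻¹ * a ∈ P → c⁻¹ * b ∈ P → c⁻¹ * wedge a b ∈ P
  le_vee_left : ∀ a b : G, a⁻¹ * vee a b ∈ P
  le_vee_right : ∀ a b : G, b⁻¹ * vee a b ∈ P
  vee_le : ∀ a b c : G, a⁻¹ * c ∈ P → b⁻¹ * c ∈ P → (vee a b)⁻¹ * c ∈ P
  simples_generate : Subgroup.closure {a : G | a ∈ P ∧ a⁻¹ * Δ ∈ P} = ⊤
  conj_mem : ∀ a : G, a ∈ P → Δ⁻¹ * a * Δ ∈ P
  len_bdd : ∀ X : G, X ∈ P → X ≠ 1 →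
    BddAbove {k : ℕ | ∃ w : List G, w.length = k ∧ (∀ a ∈ w, a ∈ P ∧ a ≠ 1) ∧ w.prod = X}

namespace GarsideStructure

variable {G : Type*} [Group G] (S : GarsideStructure G)

/-- The prefix order `a ≼ b`. -/
def le (a b : G) : Prop := a⁻¹ * b ∈ S.P

/-- Strict prefix order `a ≺ b`. -/
def lt (a b : G) : Prop := S.le a b ∧ a ≠ b

/-- The suffix relation `a ≽ b ⟺ ab⁻¹ ∈ P`. -/
def ges (a b : G) : Prop := a * b⁻¹ ∈ S.P

/-- Simple elements: the interval `[1, Δ]`. -/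
def IsSimple (a : G) : Prop := a ∈ S.P ∧ S.le a S.Δ

/-- Atoms: elements of `P \ {1}` that are not products of two elements of `P \ {1}`. -/
def IsAtom' (a : G) : Prop := a ∈ S.P ∧ a ≠ 1 ∧
  ¬ ∃ b c : G, b ∈ S.P ∧ b ≠ 1 ∧ c ∈ S.P ∧ c ≠ 1 ∧ a = b * c

/-- The letter length `‖X‖` of a positive element. -/
noncomputable def norm (X : G) : ℕ :=
  sSup {k : ℕ | ∃ w : List G, w.length = k ∧ (∀ a ∈ w, a ∈ S.P ∧ a ≠ 1) ∧ w.prod = X}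

/-- Finite type: finitely many simple elements. -/
def FiniteType : Prop := {a : G | S.IsSimple a}.Finite

/-- Homogeneous: the letter length is additive on `P`. -/
def Homogeneous : Prop := ∀ X ∈ S.P, ∀ Y ∈ S.P, S.norm (X * Y) = S.norm X + S.norm Y

/-- Symmetric: for simple `u, v`, `u ≼ v ⟺ v ≽ u`. -/
def IsSymmetric : Prop := ∀ u v : G, S.IsSimple u → S.IsSimple v → (S.le u v ↔ S.ges v u)

/-- Square free: no simple element contains the square of an atom. -/
def SquareFree : Prop := ∀ a : G, S.IsSimple a →
  ¬ ∃ U x V : G, U ∈ S.P ∧ S.IsAtom' x ∧ V ∈ S.P ∧ a = U * x ^ 2 * V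

/-- The right complement `∂A = A⁻¹Δ`. -/
def dl (A : G) : G := A⁻¹ * S.Δ

/-- `τ(X) = Δ⁻¹XΔ`. -/
def tau (X : G) : G := S.Δ⁻¹ * X * S.Δ

/-- The product `A·B` of simple elements is left weighted if `A = (AB) ∧ Δ`. -/
def LeftWeighted (A B : G) : Prop := A = S.wedge (A * B) S.Δ

/-- The gcd for the suffix order `≽` (derived from the lcm for `≼`). -/
def rwedge (a b : G) : G := (S.vee a⁻¹ b⁻¹)⁻¹

/-- The product `A·B` of simple elements is right weighted if `B = (AB) ∧̃ Δ`. -/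
def RightWeighted (A B : G) : Prop := B = S.rwedge (A * B) S.Δ

end GarsideStructure
/-- A Garside structure together with the (unique) left normal form of each element:
`X = Δ^(nfInf X) · (nfWord X)`, where the factors of `nfWord X` are simple elements
different from `1` and `Δ` and each consecutive pair is left weighted. -/
structure GarsideStructureNF (G : Type*) [Group G] extends GarsideStructure G where
  nfInf : G → ℤ
  nfWord : G → List G
  nf_factors : ∀ X : G, ∀ a ∈ nfWord X,
    toGarsideStructure.IsSimple a ∧ a ≠ 1 ∧ a ≠ Δ
  nf_chain : ∀ X : G, List.Chain' toGarsideStructure.LeftWeighted (nfWord X)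
  nf_prod : ∀ X : G, X = Δ ^ nfInf X * (nfWord X).prod
  nf_unique : ∀ (X : G) (p : ℤ) (w : List G),
    (∀ a ∈ w, toGarsideStructure.IsSimple a ∧ a ≠ 1 ∧ a ≠ Δ) →
    List.Chain' toGarsideStructure.LeftWeighted w →
    X = Δ ^ p * w.prod → p = nfInf X ∧ w = nfWord X

namespace GarsideStructureNF

variable {G : Type*} [Group G] (S : GarsideStructureNF G)

/-- The infimum `inf X` of `X`: the power of `Δ` in the left normal form. -/
def inf (X : G) : ℤ := S.nfInf X

/-- The canonical length `ℓ(X)`. -/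
def ell (X : G) : ℕ := (S.nfWord X).length

/-- The initial factor `ι(X) = τ^{-p}(A₁)`. -/
def iota (X : G) : G := S.Δ ^ S.nfInf X * (S.nfWord X).headD 1 * S.Δ ^ (-S.nfInf X)

/-- The final factor `φ(X) = A_r`. -/
def phi (X : G) : G := (S.nfWord X).getLastD 1

/-- The preferred prefix `𝔭(X) = ι(X) ∧ ∂(φ(X))`. -/
def pp (X : G) : G := S.wedge (S.iota X) ((S.phi X)⁻¹ * S.Δ)

/-- Cyclic sliding `𝔰(X) = 𝔭(X)⁻¹ X 𝔭(X)` (and `𝔰(X) = X` when `ℓ(X) = 0`). -/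
def sliding (X : G) : G := if S.ell X = 0 then X else (S.pp X)⁻¹ * X * S.pp X

/-- Cycling `c(X) = ι(X)⁻¹ X ι(X)` (and `c(X) = X` when `ℓ(X) = 0`). -/
def cycling (X : G) : G := if S.ell X = 0 then X else (S.iota X)⁻¹ * X * S.iota X

/-- Decycling `d(X) = φ(X) X φ(X)⁻¹` (and `d(X) = X` when `ℓ(X) = 0`). -/
def decycling (X : G) : G := if S.ell X = 0 then X else S.phi X * X * (S.phi X)⁻¹

/-- The set of sliding circuits `SC(X) = {Y ∈ X^G | 𝔰^m(Y) = Y for some m > 0}`. -/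
def SC (X : G) : Set G := {Y : G | IsConj X Y ∧ ∃ m : ℕ, 0 < m ∧ S.sliding^[m] Y = Y}

/-- `s` is an SC-minimal conjugator for `X`. -/
def SCMinConj (X s : G) : Prop :=
  s ∈ S.P ∧ s ≠ 1 ∧ s⁻¹ * X * s ∈ S.SC X ∧
  ∀ t : G, S.lt 1 t → S.lt t s → t⁻¹ * X * t ∉ S.SC X

/-- The summit infimum `inf_s X = max {inf Y | Y ∈ X^G}`. -/
noncomputable def infS (X : G) : ℤ := sSup {p : ℤ | ∃ Y : G, IsConj X Y ∧ p = S.nfInf Y}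

/-- The summit length `ℓ_s(X) = min {ℓ(Y) | Y ∈ X^G}`. -/
noncomputable def ellS (X : G) : ℕ := sInf {r : ℕ | ∃ Y : G, IsConj X Y ∧ r = S.ell Y}

end GarsideStructureNF

/-!
Write `XY = A·W` with `W = x^k B Y`. Since `Δ = A·B` and `∧` is left-invariant,
`XY ∧ Δ = A·(W ∧ B)`, and a positive `Z` with `Δ ⋠ Z` has infimum `0` and initial factor
`Z ∧ Δ`. So it suffices that a nontrivial common prefix `g` of `B` and `W` forces `B ≼ W`.
Put `g₁ = x \ g`. Square-freeness and a length count (homogeneity) give `x \ g₁ = g₁`,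
so `g₁` passes through the powers of `x`: `g₁ ≼ BY`. As `g₁ ≼ ∂x`, left-weightedness of
`x·B` (`B ∧ ∂x = 1`) rules out `g ≼ g₁`, which by another length count leaves
`x ≼ g ∨ g₁`; hence `B ∨ x ≼ BY`. Finally symmetry gives `B ∨ x ≼ x (B ∨ x)`, so
`B ≼ B ∨ x ≼ x^k (B ∨ x) ≼ x^k B Y`.
-/

namespace GarsideStructure

variable {G : Type*} [Group G] (S : GarsideStructure G)

def positives : Submonoid G where
  carrier := S.P
  mul_mem' := S.mul_mem
  one_mem' := S.one_mem

lemma zpow_mem {a : G} (ha : a ∈ S.P) {n : ℤ} (hn : 0 ≤ n) : a ^ n ∈ S.P := by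
  lift n to ℕ using hn
  rw [zpow_natCast]
  exact S.positives.pow_mem ha n

lemma one_le_iff {a : G} : S.le 1 a ↔ a ∈ S.P := by
  simp [GarsideStructure.le]

lemma le_refl (a : G) : S.le a a := by
  simpa [GarsideStructure.le] using S.one_mem

lemma le_trans {a b c : G} (hab : S.le a b) (hbc : S.le b c) : S.le a c := by
  simpa [GarsideStructure.le, mul_assoc] using S.mul_mem hab hbc

lemma le_antisymm {a b : G} (hab : S.le a b) (hba : S.le b a) : a = b :=
  inv_mul_eq_one.mp (S.inter_inv _ hab (by rw [mul_inv_rev, inv_inv]; exact hba))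

lemma mem_of_le {a b : G} (ha : a ∈ S.P) (hab : S.le a b) : b ∈ S.P := by
  simpa using S.mul_mem ha hab

lemma eq_one_of_le_one {a : G} (ha : a ∈ S.P) (h : S.le a 1) : a = 1 :=
  S.inter_inv a ha (by simpa [GarsideStructure.le] using h)

lemma le_mul_right (a : G) {b : G} (hb : b ∈ S.P) : S.le a (a * b) := by
  simpa [GarsideStructure.le] using hb

lemma mul_le_mul_left_iff (c : G) {a b : G} : S.le (c * a) (c * b) ↔ S.le a b := by
  simp only [GarsideStructure.le, mul_inv_rev, mul_assoc, inv_mul_cancel_left]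

lemma wedge_mem {a b : G} (ha : a ∈ S.P) (hb : b ∈ S.P) : S.wedge a b ∈ S.P :=
  S.one_le_iff.1 (S.le_wedge a b 1 (S.one_le_iff.2 ha) (S.one_le_iff.2 hb))

lemma wedge_eq_left {a b : G} (h : S.le a b) : S.wedge a b = a :=
  S.le_antisymm (S.wedge_le_left a b) (S.le_wedge a b a (S.le_refl a) h)

lemma wedge_mul_left (c a b : G) : S.wedge (c * a) (c * b) = c * S.wedge a b := by
  have hc : ∀ {u v : G}, S.le u (c * v) ↔ S.le (c⁻¹ * u) v := fun {u v} => by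
    rw [← S.mul_le_mul_left_iff c (a := c⁻¹ * u), mul_inv_cancel_left]
  apply S.le_antisymm
  · rw [← mul_inv_cancel_left c (S.wedge (c * a) (c * b)), S.mul_le_mul_left_iff]
    exact S.le_wedge _ _ _ (hc.1 (S.wedge_le_left _ _)) (hc.1 (S.wedge_le_right _ _))
  · exact S.le_wedge _ _ _ ((S.mul_le_mul_left_iff c).2 (S.wedge_le_left a b))
      ((S.mul_le_mul_left_iff c).2 (S.wedge_le_right a b))

lemma wedge_dl_eq_one_of_leftWeighted {u w : G} (h : S.LeftWeighted u w) :
    S.wedge w (S.dl u) = 1 := by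
  apply mul_left_cancel (a := u)
  rw [← S.wedge_mul_left, dl, mul_inv_cancel_left, mul_one]
  exact h.symm

lemma dl_le_delta {a : G} (ha : a ∈ S.P) : S.le (S.dl a) S.Δ := by
  simpa [GarsideStructure.le, dl, mul_assoc] using S.conj_mem a ha

lemma inv_mul_le_dl (a : G) {b : G} (hb : S.IsSimple b) : S.le (a⁻¹ * b) (S.dl a) := by
  simpa [GarsideStructure.le, dl, mul_assoc] using hb.2

lemma isSimple_of_le {a b : G} (hb : S.IsSimple b) (ha : a ∈ S.P) (hab : S.le a b) :
    S.IsSimple a :=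
  ⟨ha, S.le_trans hab hb.2⟩

lemma isSimple_vee {a b : G} (ha : S.IsSimple a) (hb : S.IsSimple b) :
    S.IsSimple (S.vee a b) :=
  ⟨S.mem_of_le ha.1 (S.le_vee_left a b), S.vee_le _ _ _ ha.2 hb.2⟩

lemma isSimple_inv_mul {a b : G} (ha : S.IsSimple a) (hb : S.IsSimple b) (hab : S.le a b) :
    S.IsSimple (a⁻¹ * b) :=
  ⟨hab, S.le_trans (S.inv_mul_le_dl a hb) (S.dl_le_delta ha.1)⟩

lemma le_mul_of_isSimple (hsym : S.IsSymmetric) {c s : G} (hc : c ∈ S.P)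
    (hs : S.IsSimple s) (hcs : S.IsSimple (c * s)) : S.le s (c * s) :=
  (hsym s (c * s) hs hcs).2 (by simpa [GarsideStructure.ges] using hc)

lemma le_pow_mul_of_le_mul {c v : G} (h : S.le v (c * v)) (i : ℕ) : S.le v (c ^ i * v) := by
  induction i with
  | zero => simpa using S.le_refl v
  | succ i ih =>
    rw [pow_succ', mul_assoc]
    exact S.le_trans h ((S.mul_le_mul_left_iff c).2 ih)

lemma mul_ne_one {a b : G} (ha : a ∈ S.P) (ha1 : a ≠ 1) (hb : b ∈ S.P) : a * b ≠ 1 :=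
  fun h => ha1 (S.inter_inv a ha (inv_eq_of_mul_eq_one_right h ▸ hb))

lemma one_le_norm {X : G} (hX : X ∈ S.P) (hX1 : X ≠ 1) : 1 ≤ S.norm X :=
  le_csSup (S.len_bdd X hX hX1) ⟨[X], by simp, by simp [hX, hX1], by simp⟩

lemma norm_atom {x : G} (hx : S.IsAtom' x) : S.norm x = 1 := by
  refine Nat.le_antisymm (csSup_le ⟨1, [x], by simp, by simp [hx.1, hx.2.1], by simp⟩ ?_)
    (S.one_le_norm hx.1 hx.2.1)
  rintro _ ⟨w, rfl, hw, rfl⟩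
  match w, hw with
  | [], _ | [_], _ => simp
  | a :: b :: t, hw =>
    have ht : t.prod ∈ S.P := S.positives.list_prod_mem fun c hc => (hw c (by simp [hc])).1
    refine absurd ⟨a, b * t.prod, (hw a (by simp)).1, (hw a (by simp)).2,
      S.mul_mem (hw b (by simp)).1 ht, S.mul_ne_one (hw b (by simp)).1 (hw b (by simp)).2 ht,
      by simp⟩ hx.2.2

lemma eq_of_atom_mul_eq_mul (hhom : S.Homogeneous) {x h e s : G} (hx : S.IsAtom' x)
    (hh : h ∈ S.P) (he : e ∈ S.P) (he1 : e ≠ 1) (hhs : S.le h s) (heq : x * h = e * s) :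
    h = s := by
  obtain ⟨c, hc, rfl⟩ : ∃ c, c ∈ S.P ∧ s = h * c := ⟨h⁻¹ * s, hhs, by group⟩
  suffices c = 1 by simp [this]
  by_contra hc1
  have hnorm := congrArg S.norm heq
  rw [hhom x hx.1 h hh, hhom e he _ (S.mul_mem hh hc), hhom h hh c hc, S.norm_atom hx] at hnorm
  have := S.one_le_norm he he1
  have := S.one_le_norm hc hc1
  omega

lemma eq_atom_mul_of_inv_mul_le (hsym : S.IsSymmetric) (hhom : S.Homogeneous) {x m s : G}
    (hx : S.IsAtom' x) (hm : S.IsSimple m) (hs : S.IsSimple s) (hxm : S.le x m)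
    (hsm : S.le s m) (hxs : ¬ S.le x s) (h : S.le (x⁻¹ * m) s) : m = x * s := by
  have he1 : m * s⁻¹ ≠ 1 := fun h1 => hxs (mul_inv_eq_one.mp h1 ▸ hxm)
  rw [← S.eq_of_atom_mul_eq_mul hhom hx hxm ((hsym s m hs hm).1 hsm) he1 h (by group)]
  group

lemma not_atom_le_of_isSimple_mul (hsf : S.SquareFree) {x s : G} (hx : S.IsAtom' x)
    (hxs : S.IsSimple (x * s)) : ¬ S.le x s := fun h =>
  hsf _ hxs ⟨1, x, x⁻¹ * s, S.one_mem, hx, h, by group⟩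

/-- The right complement `x \ g` of Garside theory. -/
def residual (x g : G) : G := x⁻¹ * S.vee x g

lemma mul_residual (x g : G) : x * S.residual x g = S.vee x g :=
  mul_inv_cancel_left _ _

lemma isSimple_residual {x g : G} (hx : S.IsSimple x) (hg : S.IsSimple g) :
    S.IsSimple (S.residual x g) :=
  S.isSimple_inv_mul hx (S.isSimple_vee hx hg) (S.le_vee_left x g)

lemma residual_le_of_le_mul {x g V : G} (hV : V ∈ S.P) (h : S.le g (x * V)) :
    S.le (S.residual x g) V := by
  rw [← S.mul_le_mul_left_iff x, mul_residual]
  exact S.vee_le _ _ _ (S.le_mul_right x hV) h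

lemma le_of_residual_eq_self {x s W : G} (hfix : S.residual x s = s) (hx : x ∈ S.P)
    (hW : W ∈ S.P) (j : ℕ) (h : S.le s (x ^ j * W)) : S.le s W := by
  induction j with
  | zero => simpa using h
  | succ j ih =>
    refine ih (hfix ▸ S.residual_le_of_le_mul (S.mul_mem (S.positives.pow_mem hx j) hW) ?_)
    rwa [pow_succ', mul_assoc] at h

lemma residual_residual (hsym : S.IsSymmetric) (hhom : S.Homogeneous) (hsf : S.SquareFree)
    {x g : G} (hx : S.IsAtom' x) (hxs : S.IsSimple x) (hg : S.IsSimple g) :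
    S.residual x (S.residual x g) = S.residual x g := by
  set g₁ := S.residual x g
  have hg₁ : S.IsSimple g₁ := S.isSimple_residual hxs hg
  have hxg₁ : S.IsSimple (x * g₁) := S.mul_residual x g ▸ S.isSimple_vee hxs hg
  have hle : S.le (S.vee x g₁) (x * g₁) :=
    S.vee_le _ _ _ (S.le_mul_right x hg₁.1) (S.le_mul_of_isSimple hsym hxs.1 hg₁ hxg₁)
  have hres : S.le (S.residual x g₁) g₁ := by
    rwa [← S.mul_le_mul_left_iff x, mul_residual]
  have := S.eq_atom_mul_of_inv_mul_le hsym hhom hx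
    (S.isSimple_of_le hxg₁ (S.mem_of_le hxs.1 (S.le_vee_left x g₁)) hle) hg₁
    (S.le_vee_left x g₁) (S.le_vee_right x g₁) (S.not_atom_le_of_isSimple_mul hsf hx hxg₁)
    hres
  rw [residual, this, inv_mul_cancel_left]

lemma atom_le_vee_residual_or_le_residual (hsym : S.IsSymmetric) (hhom : S.Homogeneous)
    {x g : G} (hx : S.IsAtom' x) (hxs : S.IsSimple x) (hg : S.IsSimple g) :
    S.le x (S.vee g (S.residual x g)) ∨ S.le g (S.residual x g) := by
  set g₁ := S.residual x g
  set d := S.vee g g₁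
  by_cases hxd : S.le x d
  · exact Or.inl hxd
  right
  -- otherwise `x ∨ d = x g₁`, and counting lengths forces `d = g₁`
  have hg₁ : S.IsSimple g₁ := S.isSimple_residual hxs hg
  have hxg₁ : S.IsSimple (x * g₁) := S.mul_residual x g ▸ S.isSimple_vee hxs hg
  have hvee : S.vee x d = x * g₁ := by
    apply S.le_antisymm
    · refine S.vee_le _ _ _ (S.le_mul_right x hg₁.1) (S.vee_le _ _ _ ?_
        (S.le_mul_of_isSimple hsym hxs.1 hg₁ hxg₁))
      rw [S.mul_residual]
      exact S.le_vee_right x g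
    · rw [S.mul_residual]
      exact S.vee_le _ _ _ (S.le_vee_left x d)
        (S.le_trans (S.le_vee_left g g₁) (S.le_vee_right x d))
  have hd : S.vee x d = x * d :=
    S.eq_atom_mul_of_inv_mul_le hsym hhom hx (hvee ▸ hxg₁) (S.isSimple_vee hg hg₁)
      (S.le_vee_left x d) (S.le_vee_right x d) hxd
      (by rw [hvee, inv_mul_cancel_left]; exact S.le_vee_right g g₁)
  rw [← mul_left_cancel (hd.symm.trans hvee)]
  exact S.le_vee_left g g₁

theorem le_pow_mul_mul_of_common_prefix (hsym : S.IsSymmetric) (hhom : S.Homogeneous)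
    (hsf : S.SquareFree) {x B Y g : G} (hx : S.IsAtom' x) (hxs : S.IsSimple x)
    (hB : S.IsSimple B) (hBx : S.wedge B (S.dl x) = 1) (hY : Y ∈ S.P) (k : ℕ)
    (hg : g ∈ S.P) (hg1 : g ≠ 1) (hgB : S.le g B) (hgW : S.le g (x ^ k * (B * Y))) :
    S.le B (x ^ k * (B * Y)) := by
  obtain _ | k := k
  · simpa using S.le_mul_right B hY
  have hgs : S.IsSimple g := S.isSimple_of_le hB hg hgB
  set g₁ := S.residual x g
  have hg₁BY : S.le g₁ (B * Y) :=
    S.le_of_residual_eq_self (S.residual_residual hsym hhom hsf hx hxs hgs) hxs.1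
      (S.mul_mem hB.1 hY) k (S.residual_le_of_le_mul
        (S.mul_mem (S.positives.pow_mem hxs.1 k) (S.mul_mem hB.1 hY))
        (by rwa [pow_succ', mul_assoc] at hgW))
  have hxBg₁ : S.le x (S.vee B g₁) := by
    rcases S.atom_le_vee_residual_or_le_residual hsym hhom hx hxs hgs with h | h
    · exact S.le_trans h (S.vee_le _ _ _ (S.le_trans hgB (S.le_vee_left B g₁))
        (S.le_vee_right B g₁))
    · refine absurd (S.eq_one_of_le_one hg ?_) hg1
      rw [← hBx]
      exact S.le_wedge _ _ _ hgB (S.le_trans h (S.inv_mul_le_dl x (S.isSimple_vee hxs hgs)))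
  set v := S.vee B x
  have hvBY : S.le v (B * Y) := S.vee_le _ _ _ (S.le_mul_right B hY)
    (S.le_trans hxBg₁ (S.vee_le _ _ _ (S.le_mul_right B hY) hg₁BY))
  have hv : S.IsSimple v := S.isSimple_vee hB hxs
  have hvxv : S.le v (x * v) := by
    have hxv : S.le x v := S.le_vee_right B x
    simpa using (S.mul_le_mul_left_iff x).2 (S.le_mul_of_isSimple hsym hxs.1
      (S.isSimple_inv_mul hxs hv hxv) (by simpa using hv))
  exact S.le_trans (S.le_vee_left B x) (S.le_trans (S.le_pow_mul_of_le_mul hvxv (k + 1))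
    ((S.mul_le_mul_left_iff _).2 hvBY))

lemma wedge_mul_delta_eq_of_leftWeighted {a V : G} (ha : S.IsSimple a) (hV : V ∈ S.P)
    (hlw : S.LeftWeighted a (S.wedge V S.Δ)) : S.wedge (a * V) S.Δ = a := by
  set D := S.wedge (a * V) S.Δ
  have haD : S.le a D := S.le_wedge _ _ _ (S.le_mul_right a hV) ha.2
  have huV : S.le (a⁻¹ * D) V := by
    rw [← S.mul_le_mul_left_iff a, mul_inv_cancel_left]
    exact S.wedge_le_left _ _
  have hudl : S.le (a⁻¹ * D) (S.dl a) :=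
    S.inv_mul_le_dl a ⟨S.mem_of_le ha.1 haD, S.wedge_le_right _ _⟩
  have hu : a⁻¹ * D = 1 := by
    refine S.eq_one_of_le_one haD ?_
    rw [← S.wedge_dl_eq_one_of_leftWeighted hlw]
    exact S.le_wedge _ _ _ (S.le_wedge _ _ _ huV (S.le_trans hudl (S.dl_le_delta ha.1))) hudl
  exact (inv_mul_eq_one.mp hu).symm

lemma wedge_prod_delta_eq_headD (l : List G) (hl : ∀ a ∈ l, S.IsSimple a)
    (hc : l.IsChain S.LeftWeighted) : S.wedge l.prod S.Δ = l.headD 1 := by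
  induction l with
  | nil => simpa using S.wedge_eq_left (S.one_le_iff.2 S.Δ_mem)
  | cons a l ih =>
    cases l with
    | nil => simpa using S.wedge_eq_left (hl a (by simp)).2
    | cons b l =>
      rw [List.prod_cons]
      apply S.wedge_mul_delta_eq_of_leftWeighted (hl a (by simp))
        (S.positives.list_prod_mem fun c hc => (hl c (List.mem_cons_of_mem a hc)).1)
      rw [ih (fun c hc => hl c (List.mem_cons_of_mem a hc)) (List.isChain_cons_cons.1 hc).2]
      exact (List.isChain_cons_cons.1 hc).1

lemma delta_le_zpow_mul {n : ℤ} (hn : 1 ≤ n) {X : G} (hX : X ∈ S.P) :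
    S.le S.Δ (S.Δ ^ n * X) := by
  have h : S.Δ⁻¹ * (S.Δ ^ n * X) = S.Δ ^ (n - 1) * X := by group
  rw [GarsideStructure.le, h]
  exact S.mul_mem (S.zpow_mem S.Δ_mem (by omega)) hX

end GarsideStructure

namespace GarsideStructureNF

variable {G : Type*} [Group G] (S : GarsideStructureNF G)

lemma nfWord_prod_mem (X : G) : (S.nfWord X).prod ∈ S.P :=
  S.positives.list_prod_mem fun a ha => (S.nf_factors X a ha).1.1

lemma mem_P_of_nfInf_nonneg {X : G} (hX : 0 ≤ S.nfInf X) : X ∈ S.P := by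
  rw [S.nf_prod X]
  exact S.mul_mem (S.zpow_mem S.Δ_mem hX) (S.nfWord_prod_mem X)

lemma iota_eq_wedge_delta {Z : G} (hZ : Z ∈ S.P) (hΔZ : ¬ S.le S.Δ Z) :
    S.iota Z = S.wedge Z S.Δ := by
  have hwedge := S.wedge_prod_delta_eq_headD (S.nfWord Z) (fun a ha => (S.nf_factors Z a ha).1)
    (S.nf_chain Z)
  obtain ⟨p, w, hp, hw, hZw⟩ :
      ∃ p w, S.nfInf Z = p ∧ S.nfWord Z = w ∧ Z = S.Δ ^ p * w.prod :=
    ⟨_, _, rfl, rfl, S.nf_prod Z⟩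
  have hfac := S.nf_factors Z
  rw [hw] at hwedge hfac
  have hw_mem : w.prod ∈ S.P := hw ▸ S.nfWord_prod_mem Z
  have hp0 : p = 0 := by
    rcases lt_trichotomy p 0 with hp | hp | hp
    · -- a negative infimum would put `Δ` below the first factor
      have hΔw : S.le S.Δ w.prod := by
        rw [show w.prod = S.Δ ^ (-p) * Z by rw [hZw]; group]
        exact S.delta_le_zpow_mul (by omega) hZ
      have hΔhead : S.le S.Δ (w.headD 1) := hwedge ▸ S.le_wedge _ _ _ hΔw (S.le_refl _)
      cases w with
      | nil =>
        have hΔ1 : S.Δ = 1 := S.eq_one_of_le_one S.Δ_mem hΔhead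
        exact absurd (by rw [hΔ1]; exact S.one_le_iff.2 hZ) hΔZ
      | cons a l =>
        exact absurd (S.le_antisymm (hfac a (by simp)).1.2 hΔhead) (hfac a (by simp)).2.2
    · exact hp
    · exact absurd (hZw ▸ S.delta_le_zpow_mul (by omega) hw_mem) hΔZ
  subst hp0
  rw [GarsideStructureNF.iota, hp, hw, ← hwedge, hZw]
  simp

end GarsideStructureNF

theorem statement19_general {G : Type*} [Group G] (S : GarsideStructureNF G)
    (hsym : S.IsSymmetric) (hhom : S.Homogeneous)
    (hsf : S.SquareFree)
    (k : ℕ) (hk : 1 ≤ k) (A B x : G)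
    (hA : S.IsSimple A)
    (hB : B = A⁻¹ * S.Δ) (hx : S.IsAtom' x)
    (hnfWord : S.nfWord (A * x ^ k * B) = A :: (List.replicate k x ++ [B]))
    (Y : G) (hY : S.nfInf Y = 0) :
    S.le S.Δ (A * x ^ k * B * Y) ∨ S.iota (A * x ^ k * B * Y) = A := by
  obtain ⟨k, rfl⟩ : ∃ j, k = j + 1 := ⟨k - 1, by omega⟩
  have hxs : S.IsSimple x := (S.nf_factors (A * x ^ (k + 1) * B) x (by simp [hnfWord])).1
  have hxB : S.LeftWeighted x B := by
    have hc := S.nf_chain (A * x ^ (k + 1) * B)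
    rw [hnfWord, List.replicate_succ', List.append_assoc] at hc
    exact (List.isChain_cons_append_cons_cons.1 hc).2.1
  have hBs : S.IsSimple B := hB ▸ ⟨hA.2, S.dl_le_delta hA.1⟩
  have hYP : Y ∈ S.P := S.mem_P_of_nfInf_nonneg hY.ge
  set W := x ^ (k + 1) * (B * Y)
  have hWP : W ∈ S.P := S.mul_mem (S.positives.pow_mem hxs.1 _) (S.mul_mem hBs.1 hYP)
  have hZ : A * x ^ (k + 1) * B * Y = A * W := by simp only [W, mul_assoc]
  have hΔ : S.Δ = A * B := by rw [hB, mul_inv_cancel_left]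
  rw [hZ]
  by_cases hΔZ : S.le S.Δ (A * W)
  · exact Or.inl hΔZ
  right
  have hWB : S.wedge W B = 1 := by
    by_contra hne
    refine hΔZ (hΔ ▸ (S.mul_le_mul_left_iff A).2 ?_)
    exact S.le_pow_mul_mul_of_common_prefix hsym hhom hsf hx hxs hBs
      (S.wedge_dl_eq_one_of_leftWeighted hxB) hYP (k + 1) (S.wedge_mem hWP hBs.1) hne
      (S.wedge_le_right W B) (S.wedge_le_left W B)
  have hZP : A * W ∈ S.P := S.mul_mem hA.1 hWP
  rw [S.iota_eq_wedge_delta hZP hΔZ, hΔ, S.wedge_mul_left, hWB, mul_one]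

/-- **Proposition 7.1** (Orevkov): in a square free symmetric homogeneous Garside
structure of finite type, let `k ≥ 1`, let `A` be simple with `A ∉ {1, δ}`, `B = ∂A`
(i.e. `AB = δ`), and let `x` be an atom such that `A · x^k · B` is in left normal form.
Set `X = A x^k B` and let `Y ∈ G` with `inf Y = 0`.  Then either `δ ≼ XY`, or
`ι(XY) = A`. -/
theorem statement19 {G : Type*} [Group G] (S : GarsideStructureNF G)
    (hft : S.FiniteType) (hsym : S.IsSymmetric) (hhom : S.Homogeneous)
    (hsf : S.SquareFree)
    (k : ℕ) (hk : 1 ≤ k) (A B x : G)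
    (hA : S.IsSimple A) (hA1 : A ≠ 1) (hAΔ : A ≠ S.Δ)
    (hB : B = A⁻¹ * S.Δ) (hx : S.IsAtom' x)
    (hnfInf : S.nfInf (A * x ^ k * B) = 0)
    (hnfWord : S.nfWord (A * x ^ k * B) = A :: (List.replicate k x ++ [B]))
    (Y : G) (hY : S.nfInf Y = 0) :
    S.le S.Δ (A * x ^ k * B * Y) ∨ S.iota (A * x ^ k * B * Y) = A :=
  statement19_general S hsym hhom hsf k hk A B x hA hB hx hnfWord Y hY
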